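/- arXiv:1505.02414 — 6 statements merged into one kernel-verified Lean document; each statement's English description precedes it below -/
import Mathlib

section
/- Let n ≥ 1 and σ² > 0. Suppose each agent i ∈ {1,...,n} minimizes J_i(λ) = c(λᵢ) + F(1/Σⱼλⱼ) over λᵢ ∈ [0, 1/σ²], where c: [0,1/σ²] → ℝ₊ is C², non-decreasing, strictly convex with c(0) = c'(0) = 0, and F: (0,∞) → ℝ₊ is C², non-decreasing, strictly convex, and the cost is +∞ when Σⱼλⱼ = 0. Then the game has a unique Nash equilibrium λ*, and it is symmetric with λᵢ* = λ* > 0 for all i. -/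
/-!
With `g t = F t⁻¹`, convex on `(0, ∞)` because `F` is convex and nondecreasing, agent `i` pays
`c λᵢ + g (∑ λ)`. By convexity a profile with positive total is an equilibrium exactly when every
agent satisfies the first-order condition `(c' λᵢ + g' (∑ λ)) * (μ - λᵢ) ≥ 0` for all
`μ ∈ [0, 1/σ²]`. Adding these conditions for two equilibria `λ, λ'`, each tested at the other,
gives `∑ᵢ (c' λᵢ - c' λ'ᵢ) (λᵢ - λ'ᵢ) + (g' T - g' T') (T - T') ≤ 0`; both terms are
nonnegative since `c'` and `g'` are monotone, and the first vanishes only if `λ = λ'` since `c'`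
is strictly monotone. A symmetric equilibrium `λᵢ = l` exists by the intermediate value theorem
applied to `l ↦ c' l + g' (n l)`, which tends to `-∞` as `l → 0⁺` because
`g' t = -F' (1/t) / t²` and `F' > 0`.
-/

open Set Filter Topology

/-- Cost of agent `i` in the homogeneous estimation game: privacy cost `c(λᵢ)` plus
estimation cost `F(1/Σⱼλⱼ)`, with the convention that the estimation cost is `+∞`
when `Σⱼλⱼ = 0`. -/
noncomputable def gameCost (n : ℕ) (c F : ℝ → ℝ) (i : Fin n) (lam : Fin n → ℝ) : EReal :=
  (c (lam i) : EReal) + (if 0 < ∑ j, lam j then ((F (1 / ∑ j, lam j) : ℝ) : EReal) else ⊤)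

theorem ConvexOn.add_mul_sub_le_of_hasDerivWithinAt {S : Set ℝ} {f : ℝ → ℝ} {x y f' : ℝ}
    (hf : ConvexOn ℝ S f) (hx : x ∈ S) (hy : y ∈ S) (hf' : HasDerivWithinAt f f' S x) :
    f x + f' * (y - x) ≤ f y := by
  rcases lt_trichotomy x y with hxy | rfl | hyx
  · have := hf.le_slope_of_hasDerivWithinAt hx hy hxy hf'
    rw [slope_def_field, le_div_iff₀ (sub_pos.2 hxy)] at this
    linarith
  · simp
  · have := hf.slope_le_of_hasDerivWithinAt hy hx hyx hf'
    rw [slope_def_field, div_le_iff₀ (sub_pos.2 hyx)] at this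
    linarith

theorem IsLocalMinOn.mul_sub_nonneg_of_hasDerivWithinAt {S : Set ℝ} {f : ℝ → ℝ} {x y f' : ℝ}
    (h : IsLocalMinOn f S x) (hS : Convex ℝ S) (hx : x ∈ S) (hy : y ∈ S)
    (hf' : HasDerivWithinAt f f' S x) : 0 ≤ f' * (y - x) := by
  simpa [mul_comm] using h.hasFDerivWithinAt_nonneg hf'.hasFDerivWithinAt
    (sub_mem_posTangentConeAt_of_segment_subset (hS.segment_subset hx hy))

theorem StrictConvexOn.deriv_pos_of_monotoneOn {F : ℝ → ℝ} {x : ℝ}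
    (hconv : StrictConvexOn ℝ (Ioi 0) F) (hmono : MonotoneOn F (Ioi 0)) (hx : 0 < x)
    (hF : DifferentiableAt ℝ F x) : 0 < deriv F x := by
  have hx2 : x / 2 ∈ Ioi (0 : ℝ) := half_pos hx
  have hlt := hconv.slope_lt_of_hasDerivAt hx2 hx (half_lt_self hx) hF.hasDerivAt
  exact (hmono.slope_nonneg hx2 hx).trans_lt hlt

theorem ConvexOn.comp_inv {F : ℝ → ℝ} (hconv : ConvexOn ℝ (Ioi 0) F)
    (hmono : MonotoneOn F (Ioi 0)) : ConvexOn ℝ (Ioi 0) fun t => F t⁻¹ := by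
  have himage : Inv.inv '' Ioi (0 : ℝ) = Ioi 0 := by
    ext x; simp [image_inv_eq_inv]
  have hinv : ConvexOn ℝ (Ioi (0 : ℝ)) Inv.inv := by
    simpa using convexOn_zpow (𝕜 := ℝ) (-1)
  rw [← himage] at hconv hmono
  exact hconv.comp hinv hmono

theorem ContDiffOn.comp_inv {F : ℝ → ℝ} {k : WithTop ℕ∞} (hF : ContDiffOn ℝ k F (Ioi 0)) :
    ContDiffOn ℝ k (fun t => F t⁻¹) (Ioi 0) :=
  hF.comp ((contDiffOn_inv ℝ).mono fun _ ht => ne_of_gt ht) fun _ ht => inv_pos.2 (mem_Ioi.1 ht)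

theorem DifferentiableOn.differentiableAt_comp_inv {F : ℝ → ℝ} {t : ℝ}
    (hF : DifferentiableOn ℝ F (Ioi 0)) (ht : 0 < t) : DifferentiableAt ℝ (fun s => F s⁻¹) t :=
  (hF.differentiableAt (Ioi_mem_nhds (inv_pos.2 ht))).comp t (differentiableAt_inv ht.ne')

theorem deriv_comp_inv {F : ℝ → ℝ} {t : ℝ} (ht : t ≠ 0) (hF : DifferentiableAt ℝ F t⁻¹) :
    deriv (fun s => F s⁻¹) t = -(deriv F t⁻¹ / t ^ 2) := by
  have := (hF.hasDerivAt.comp t (hasDerivAt_inv ht)).deriv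
  simp only [Function.comp_def] at this
  rw [this]
  ring

theorem tendsto_deriv_comp_inv_atBot {F : ℝ → ℝ} (hF : DifferentiableOn ℝ F (Ioi 0))
    (hconv : StrictConvexOn ℝ (Ioi 0) F) (hmono : MonotoneOn F (Ioi 0)) :
    Tendsto (deriv fun t => F t⁻¹) (𝓝[>] 0) atBot := by
  have hdiff : ∀ x : ℝ, 0 < x → DifferentiableAt ℝ F x := fun x hx =>
    hF.differentiableAt (Ioi_mem_nhds hx)
  set m := deriv F 1
  have hm : 0 < m := hconv.deriv_pos_of_monotoneOn hmono one_pos (hdiff 1 one_pos)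
  have hderiv_mono : MonotoneOn (deriv F) (Ioi 0) := hconv.convexOn.monotoneOn_deriv hdiff
  have hbound : ∀ᶠ t in 𝓝[>] (0 : ℝ), deriv (fun s => F s⁻¹) t ≤ -(m * (t⁻¹ * t⁻¹)) := by
    filter_upwards [Ioc_mem_nhdsGT one_pos] with t ⟨ht0, ht1⟩
    have hmt : m ≤ deriv F t⁻¹ := hderiv_mono (mem_Ioi.2 one_pos) (mem_Ioi.2 (inv_pos.2 ht0))
      ((one_le_inv₀ ht0).2 ht1)
    rw [deriv_comp_inv ht0.ne' (hdiff _ (inv_pos.2 ht0)), div_eq_mul_inv, ← inv_pow, sq]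
    have : 0 < t⁻¹ * t⁻¹ := by positivity
    nlinarith
  refine tendsto_atBot_mono' _ hbound (tendsto_neg_atTop_atBot.comp ?_)
  exact (tendsto_inv_nhdsGT_zero.atTop_mul_atTop₀ tendsto_inv_nhdsGT_zero).const_mul_atTop hm

theorem MonotoneOn.sub_mul_sub_nonneg {ψ : ℝ → ℝ} {U : Set ℝ} {p q : ℝ} (hψ : MonotoneOn ψ U)
    (hp : p ∈ U) (hq : q ∈ U) : 0 ≤ (ψ p - ψ q) * (p - q) := by
  rcases le_total p q with hpq | hqp
  · exact mul_nonneg_of_nonpos_of_nonpos (sub_nonpos.2 (hψ hp hq hpq)) (sub_nonpos.2 hpq)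
  · exact mul_nonneg (sub_nonneg.2 (hψ hq hp hqp)) (sub_nonneg.2 hqp)

theorem StrictMonoOn.sub_mul_sub_pos {φ : ℝ → ℝ} {S : Set ℝ} {p q : ℝ} (hφ : StrictMonoOn φ S)
    (hp : p ∈ S) (hq : q ∈ S) (hpq : p ≠ q) : 0 < (φ p - φ q) * (p - q) := by
  rcases hpq.lt_or_gt with hpq | hqp
  · exact mul_pos_of_neg_of_neg (sub_neg.2 (hφ hp hq hpq)) (sub_neg.2 hpq)
  · exact mul_pos (sub_pos.2 (hφ hq hp hqp)) (sub_pos.2 hqp)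

theorem eq_of_mul_sub_nonneg {ι : Type*} [Fintype ι] {φ ψ : ℝ → ℝ} {S U : Set ℝ}
    (hφ : StrictMonoOn φ S) (hψ : MonotoneOn ψ U) {x y : ι → ℝ}
    (hxS : ∀ i, x i ∈ S) (hyS : ∀ i, y i ∈ S) (hxU : ∑ i, x i ∈ U) (hyU : ∑ i, y i ∈ U)
    (hx : ∀ i, 0 ≤ (φ (x i) + ψ (∑ j, x j)) * (y i - x i))
    (hy : ∀ i, 0 ≤ (φ (y i) + ψ (∑ j, y j)) * (x i - y i)) : x = y := by
  have hsum : ∑ i, (φ (x i) - φ (y i)) * (x i - y i) ≤ 0 := by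
    have hsplit : ∑ i, ((φ (x i) + ψ (∑ j, x j)) * (y i - x i)
        + (φ (y i) + ψ (∑ j, y j)) * (x i - y i))
        = -∑ i, (φ (x i) - φ (y i)) * (x i - y i)
          - (ψ (∑ j, x j) - ψ (∑ j, y j)) * (∑ i, x i - ∑ i, y i) := by
      rw [← Finset.sum_sub_distrib, Finset.mul_sum, ← Finset.sum_neg_distrib,
        ← Finset.sum_sub_distrib]
      exact Finset.sum_congr rfl fun i _ => by ring
    have hnonneg := Finset.sum_nonneg fun i (_ : i ∈ Finset.univ) => add_nonneg (hx i) (hy i)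
    rw [hsplit] at hnonneg
    linarith [hψ.sub_mul_sub_nonneg hxU hyU]
  by_contra hxy
  obtain ⟨i, hi⟩ := Function.ne_iff.1 hxy
  refine hsum.not_gt (Finset.sum_pos' (fun j _ => ?_) ⟨i, Finset.mem_univ i, ?_⟩)
  · rcases eq_or_ne (x j) (y j) with hj | hj
    · simp [hj]
    · exact (hφ.sub_mul_sub_pos (hxS j) (hyS j) hj).le
  · exact hφ.sub_mul_sub_pos (hxS i) (hyS i) hi

theorem exists_mul_sub_nonneg_of_continuousOn {ψ : ℝ → ℝ} {a b : ℝ} (hab : a ≤ b)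
    (hψ : ContinuousOn ψ (Icc a b)) (ha : ψ a ≤ 0) :
    ∃ l ∈ Icc a b, ∀ μ ≤ b, 0 ≤ ψ l * (μ - l) := by
  by_cases hb : ψ b ≤ 0
  · exact ⟨b, right_mem_Icc.2 hab, fun μ hμ =>
      mul_nonneg_of_nonpos_of_nonpos hb (sub_nonpos.2 hμ)⟩
  · obtain ⟨l, hl, hψl⟩ := intermediate_value_Icc hab hψ ⟨ha, (not_le.1 hb).le⟩
    exact ⟨l, hl, fun μ _ => by simp [hψl]⟩

section Game

variable {n : ℕ} {c F : ℝ → ℝ} {b : ℝ} {lam lam' : Fin n → ℝ}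

def IsNashEquilibrium (n : ℕ) (c F : ℝ → ℝ) (b : ℝ) (lam : Fin n → ℝ) : Prop :=
  (∀ i, lam i ∈ Icc 0 b) ∧
    ∀ i, ∀ μ ∈ Icc 0 b, gameCost n c F i lam ≤ gameCost n c F i (Function.update lam i μ)

-- `c` is only given on `[0, b]`, so its derivative is taken within that interval.
noncomputable def marginalCost (c F : ℝ → ℝ) (b x T : ℝ) : ℝ :=
  derivWithin c (Icc 0 b) x + deriv (fun t => F t⁻¹) T

theorem sum_update_eq_sub_add (lam : Fin n → ℝ) (i : Fin n) (μ : ℝ) :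
    ∑ j, Function.update lam i μ j = ∑ j, lam j - lam i + μ := by
  rw [Finset.sum_update_of_mem (Finset.mem_univ i), ← Finset.sum_erase_eq_sub (Finset.mem_univ i),
    Finset.erase_eq]
  ring

theorem gameCost_of_sum_pos {i : Fin n} (h : 0 < ∑ j, lam j) :
    gameCost n c F i lam = ((c (lam i) + F (∑ j, lam j)⁻¹ : ℝ) : EReal) := by
  simp [gameCost, h, one_div, EReal.coe_add]

theorem gameCost_of_sum_nonpos {i : Fin n} (h : ∑ j, lam j ≤ 0) : gameCost n c F i lam = ⊤ := by
  simp [gameCost, h.not_gt]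

theorem gameCost_le_gameCost_update_iff {i : Fin n} {μ : ℝ} (h : 0 < ∑ j, lam j) :
    gameCost n c F i lam ≤ gameCost n c F i (Function.update lam i μ) ↔
      (0 < ∑ j, lam j - lam i + μ →
        c (lam i) + F (∑ j, lam j)⁻¹ ≤ c μ + F (∑ j, lam j - lam i + μ)⁻¹) := by
  rw [gameCost_of_sum_pos h]
  by_cases hμ : 0 < ∑ j, lam j - lam i + μ
  · rw [gameCost_of_sum_pos (by rwa [sum_update_eq_sub_add]), sum_update_eq_sub_add,
      Function.update_self, EReal.coe_le_coe_iff]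
    simp [hμ]
  · rw [gameCost_of_sum_nonpos (by rw [sum_update_eq_sub_add]; exact not_lt.1 hμ)]
    simp [hμ]

theorem IsNashEquilibrium.sum_pos (hNE : IsNashEquilibrium n c F b lam) (hn : 0 < n)
    (hb : 0 < b) : 0 < ∑ j, lam j := by
  by_contra! hT
  obtain ⟨i⟩ : Nonempty (Fin n) := ⟨⟨0, hn⟩⟩
  have hnonneg : ∀ j ∈ Finset.univ, 0 ≤ lam j := fun j _ => (hNE.1 j).1
  have hi : lam i ≤ ∑ j, lam j := Finset.single_le_sum hnonneg (Finset.mem_univ i)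
  have hT0 : 0 ≤ ∑ j, lam j := Finset.sum_nonneg hnonneg
  have hdev := hNE.2 i b (right_mem_Icc.2 hb.le)
  rw [gameCost_of_sum_nonpos hT, gameCost_of_sum_pos (by rw [sum_update_eq_sub_add]; linarith),
    top_le_iff] at hdev
  exact EReal.coe_ne_top _ hdev

theorem IsNashEquilibrium.marginalCost_mul_sub_nonneg (hNE : IsNashEquilibrium n c F b lam)
    (hn : 0 < n) (hb : 0 < b) (hc : DifferentiableOn ℝ c (Icc 0 b))
    (hF : DifferentiableOn ℝ F (Ioi 0)) (i : Fin n) {μ : ℝ} (hμ : μ ∈ Icc 0 b) :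
    0 ≤ marginalCost c F b (lam i) (∑ j, lam j) * (μ - lam i) := by
  have hT := hNE.sum_pos hn hb
  set T := ∑ j, lam j
  have hmin : IsLocalMinOn (fun ν => c ν + F (T - lam i + ν)⁻¹) (Icc 0 b) (lam i) := by
    have hnear : Ioi (lam i - T) ∈ 𝓝[Icc 0 b] lam i :=
      mem_nhdsWithin_of_mem_nhds (Ioi_mem_nhds (by linarith))
    filter_upwards [self_mem_nhdsWithin, hnear] with ν hν hpos
    simpa only [sub_add_cancel] using
      (gameCost_le_gameCost_update_iff hT).1 (hNE.2 i ν hν) (by linarith [mem_Ioi.1 hpos])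
  have hg : HasDerivAt (fun t => F t⁻¹) (deriv (fun t => F t⁻¹) T) (T - lam i + lam i) := by
    rw [sub_add_cancel]
    exact (hF.differentiableAt_comp_inv hT).hasDerivAt
  exact hmin.mul_sub_nonneg_of_hasDerivWithinAt (convex_Icc 0 b) (hNE.1 i) hμ
    ((hc _ (hNE.1 i)).hasDerivWithinAt.add (hg.comp_const_add _ _).hasDerivWithinAt)

theorem isNashEquilibrium_of_marginalCost_mul_sub_nonneg (hc : ConvexOn ℝ (Icc 0 b) c)
    (hcd : DifferentiableOn ℝ c (Icc 0 b)) (hFconv : ConvexOn ℝ (Ioi 0) F)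
    (hFmono : MonotoneOn F (Ioi 0)) (hF : DifferentiableOn ℝ F (Ioi 0))
    (hmem : ∀ i, lam i ∈ Icc 0 b) (hT : 0 < ∑ j, lam j)
    (hfoc : ∀ i, ∀ μ ∈ Icc 0 b, 0 ≤ marginalCost c F b (lam i) (∑ j, lam j) * (μ - lam i)) :
    IsNashEquilibrium n c F b lam := by
  refine ⟨hmem, fun i μ hμ => (gameCost_le_gameCost_update_iff hT).2 fun hpos => ?_⟩
  set T := ∑ j, lam j
  have hc_tangent := hc.add_mul_sub_le_of_hasDerivWithinAt (hmem i) hμ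
    (hcd _ (hmem i)).hasDerivWithinAt
  have hg_tangent := (hFconv.comp_inv hFmono).add_mul_sub_le_of_hasDerivWithinAt hT hpos
    (hF.differentiableAt_comp_inv hT).hasDerivAt.hasDerivWithinAt
  have hfoc_i := hfoc i μ hμ
  rw [show T - lam i + μ - T = μ - lam i by ring] at hg_tangent
  rw [marginalCost, add_mul] at hfoc_i
  linarith

theorem IsNashEquilibrium.eq (hNE : IsNashEquilibrium n c F b lam)
    (hNE' : IsNashEquilibrium n c F b lam') (hn : 0 < n) (hb : 0 < b)
    (hc : StrictConvexOn ℝ (Icc 0 b) c) (hcd : DifferentiableOn ℝ c (Icc 0 b))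
    (hFconv : ConvexOn ℝ (Ioi 0) F) (hFmono : MonotoneOn F (Ioi 0))
    (hF : DifferentiableOn ℝ F (Ioi 0)) : lam = lam' :=
  eq_of_mul_sub_nonneg (hc.strictMonoOn_derivWithin hcd)
    ((hFconv.comp_inv hFmono).monotoneOn_deriv fun _ => hF.differentiableAt_comp_inv)
    hNE.1 hNE'.1 (hNE.sum_pos hn hb) (hNE'.sum_pos hn hb)
    (fun i => hNE.marginalCost_mul_sub_nonneg hn hb hcd hF i (hNE'.1 i))
    (fun i => hNE'.marginalCost_mul_sub_nonneg hn hb hcd hF i (hNE.1 i))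

theorem exists_pos_marginalCost_mul_sub_nonneg (hn : 0 < n) (hb : 0 < b)
    (hc : ContDiffOn ℝ 1 c (Icc 0 b)) (hcconv : ConvexOn ℝ (Icc 0 b) c)
    (hF : ContDiffOn ℝ 1 F (Ioi 0)) (hFconv : StrictConvexOn ℝ (Ioi 0) F)
    (hFmono : MonotoneOn F (Ioi 0)) :
    ∃ l ∈ Ioc 0 b, ∀ μ ∈ Icc 0 b, 0 ≤ marginalCost c F b l (n * l) * (μ - l) := by
  have hn' : (0 : ℝ) < n := Nat.cast_pos.2 hn
  have hscale : Tendsto (fun l : ℝ => n * l) (𝓝[>] 0) (𝓝[>] 0) :=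
    tendsto_nhdsWithin_of_tendsto_nhds_of_eventually_within _
      ((continuous_const_mul _).tendsto' 0 0 (mul_zero _) |>.mono_left nhdsWithin_le_nhds)
      (eventually_nhdsWithin_of_forall fun _ hl => mul_pos hn' hl)
  have hg_atBot := (tendsto_deriv_comp_inv_atBot (hF.differentiableOn one_ne_zero) hFconv
    hFmono).comp hscale
  obtain ⟨l₀, ⟨hl₀, hl₀b⟩, hg⟩ : ∃ l₀ ∈ Ioc 0 b,
      deriv (fun t => F t⁻¹) (n * l₀) ≤ -derivWithin c (Icc 0 b) b :=
    (Filter.Eventually.and (Ioc_mem_nhdsGT hb) (hg_atBot.eventually (eventually_le_atBot _))).exists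
  have hc_le : derivWithin c (Icc 0 b) l₀ ≤ derivWithin c (Icc 0 b) b :=
    hcconv.monotoneOn_derivWithin (hc.differentiableOn one_ne_zero) ⟨hl₀.le, hl₀b⟩
      (right_mem_Icc.2 hb.le) hl₀b
  have hcont : ContinuousOn (fun l => marginalCost c F b l (n * l)) (Icc l₀ b) := by
    refine ((hc.continuousOn_derivWithin (uniqueDiffOn_Icc hb) le_rfl).mono
      (Icc_subset_Icc_left hl₀.le)).add ?_
    exact (hF.comp_inv.continuousOn_deriv_of_isOpen isOpen_Ioi le_rfl).comp
      (continuous_const_mul _).continuousOn fun l hl => mul_pos hn' (hl₀.trans_le hl.1)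
  obtain ⟨l, hl, hfoc⟩ := exists_mul_sub_nonneg_of_continuousOn hl₀b hcont
    (by simp only [marginalCost]; linarith)
  exact ⟨l, ⟨hl₀.trans_le hl.1, hl.2⟩, fun μ hμ => hfoc μ hμ.2⟩

end Game

theorem estimation_game_unique_symmetric_NE_general
    (n : ℕ) (hn : 1 ≤ n) (σ2 : ℝ) (hσ2 : 0 < σ2) (c F : ℝ → ℝ)
    (hc_smooth : ContDiffOn ℝ 2 c (Icc 0 (1 / σ2)))
    (hc_sconv : StrictConvexOn ℝ (Icc 0 (1 / σ2)) c)
    (hF_smooth : ContDiffOn ℝ 2 F (Ioi 0))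
    (hF_mono : MonotoneOn F (Ioi 0))
    (hF_sconv : StrictConvexOn ℝ (Ioi 0) F) :
    ∃ lamstar : Fin n → ℝ,
      (∀ i, lamstar i ∈ Icc 0 (1 / σ2)) ∧
      -- `lamstar` is a Nash equilibrium
      (∀ i, ∀ μ ∈ Icc 0 (1 / σ2),
        gameCost n c F i lamstar ≤ gameCost n c F i (Function.update lamstar i μ)) ∧
      -- it is the unique Nash equilibrium
      (∀ lam' : Fin n → ℝ, (∀ i, lam' i ∈ Icc 0 (1 / σ2)) →
        (∀ i, ∀ μ ∈ Icc 0 (1 / σ2),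
          gameCost n c F i lam' ≤ gameCost n c F i (Function.update lam' i μ)) →
        lam' = lamstar) ∧
      -- it is symmetric and strictly positive
      (∃ l : ℝ, 0 < l ∧ ∀ i, lamstar i = l) := by
  have hb : 0 < 1 / σ2 := by positivity
  have hc : ContDiffOn ℝ 1 c (Icc 0 (1 / σ2)) := hc_smooth.of_le one_le_two
  have hcd : DifferentiableOn ℝ c (Icc 0 (1 / σ2)) := hc.differentiableOn one_ne_zero
  have hF : ContDiffOn ℝ 1 F (Ioi 0) := hF_smooth.of_le one_le_two
  have hFd : DifferentiableOn ℝ F (Ioi 0) := hF.differentiableOn one_ne_zero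
  obtain ⟨l, ⟨hl, hlb⟩, hfoc⟩ := exists_pos_marginalCost_mul_sub_nonneg hn hb hc
    hc_sconv.convexOn hF hF_sconv hF_mono
  have hsum : ∑ _ : Fin n, l = n * l := by simp
  have hNE : IsNashEquilibrium n c F (1 / σ2) fun _ => l :=
    isNashEquilibrium_of_marginalCost_mul_sub_nonneg hc_sconv.convexOn hcd hF_sconv.convexOn
      hF_mono hFd (fun _ => ⟨hl.le, hlb⟩) (by rw [hsum]; positivity)
      (fun _ => by simpa only [hsum] using hfoc)
  refine ⟨fun _ => l, hNE.1, hNE.2, fun lam' hmem hdev => ?_, l, hl, fun _ => rfl⟩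
  exact IsNashEquilibrium.eq ⟨hmem, hdev⟩ hNE hn hb hc_sconv hcd hF_sconv.convexOn hF_mono hFd

/-- the homogeneous estimation game has a unique Nash equilibrium, and it is
symmetric with `λᵢ* = λ* > 0` for all agents `i`. -/
theorem estimation_game_unique_symmetric_NE
    (n : ℕ) (hn : 1 ≤ n) (σ2 : ℝ) (hσ2 : 0 < σ2) (c F : ℝ → ℝ)
    (hc_smooth : ContDiffOn ℝ 2 c (Icc 0 (1 / σ2)))
    (hc_nonneg : ∀ x ∈ Icc 0 (1 / σ2), 0 ≤ c x)
    (hc_mono : MonotoneOn c (Icc 0 (1 / σ2)))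
    (hc_sconv : StrictConvexOn ℝ (Icc 0 (1 / σ2)) c)
    (hc0 : c 0 = 0) (hc'0 : deriv c 0 = 0)
    (hF_smooth : ContDiffOn ℝ 2 F (Ioi 0))
    (hF_nonneg : ∀ x ∈ Ioi 0, 0 ≤ F x)
    (hF_mono : MonotoneOn F (Ioi 0))
    (hF_sconv : StrictConvexOn ℝ (Ioi 0) F) :
    ∃ lamstar : Fin n → ℝ,
      (∀ i, lamstar i ∈ Icc 0 (1 / σ2)) ∧
      -- `lamstar` is a Nash equilibrium
      (∀ i, ∀ μ ∈ Icc 0 (1 / σ2),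
        gameCost n c F i lamstar ≤ gameCost n c F i (Function.update lamstar i μ)) ∧
      -- it is the unique Nash equilibrium
      (∀ lam' : Fin n → ℝ, (∀ i, lam' i ∈ Icc 0 (1 / σ2)) →
        (∀ i, ∀ μ ∈ Icc 0 (1 / σ2),
          gameCost n c F i lam' ≤ gameCost n c F i (Function.update lam' i μ)) →
        lam' = lamstar) ∧
      -- it is symmetric and strictly positive
      (∃ l : ℝ, 0 < l ∧ ∀ i, lamstar i = l) :=
  estimation_game_unique_symmetric_NE_general n hn σ2 hσ2 c F hc_smooth hc_sconv hF_smooth hF_mono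
    hF_sconv
end

section
/- Let λ*(n) be the symmetric equilibrium precision of the homogeneous estimation game with n agents (the unique fixed point of λ = min{√(F'(1/(nλ))/(n²c'(λ))), 1/σ²}). Then λ*(n) → 0 as n → ∞. -/
open Set Filter

/-!
Fix `δ > 0` and suppose `λ*(n) ≥ δ`. Convexity of `c` with `c 0 = 0` bounds `c'(λ*(n))` below by
the secant slope `c δ / δ > 0`, while convexity and nonnegativity of `F` bound `F'` above on
`(0, 1/δ]`, which contains `1/(nλ*(n))`. The fixed-point equation then gives
`n² δ c(δ) ≤ λ*(n)² n² c'(λ*(n)) ≤ F'(1/(nλ*(n)))`, which is bounded, so this happens only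
for finitely many `n`.
-/

theorem StrictConvexOn.pos_of_nonneg_of_map_zero {E : Type*} [AddCommGroup E] [Module ℝ E]
    {S : Set E} {f : E → ℝ} (hf : StrictConvexOn ℝ S f) (hnn : ∀ y ∈ S, 0 ≤ f y)
    (h0 : 0 ∈ S) (hf0 : f 0 = 0) {x : E} (hx : x ∈ S) (hx0 : x ≠ 0) : 0 < f x := by
  have hmid := hf.2 h0 hx hx0.symm (by norm_num : (0 : ℝ) < 1 / 2) (by norm_num : (0 : ℝ) < 1 / 2)
    (by norm_num)
  have hmem : (1 / 2 : ℝ) • (0 : E) + (1 / 2 : ℝ) • x ∈ S :=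
    hf.1 h0 hx (by norm_num) (by norm_num) (by norm_num)
  simp only [smul_zero, zero_add, hf0, smul_eq_mul, mul_zero] at hmid hmem
  linarith [hnn _ hmem]

theorem ConvexOn.div_le_deriv_of_map_zero {S : Set ℝ} {f : ℝ → ℝ} (hf : ConvexOn ℝ S f)
    (h0 : 0 ∈ S) (hf0 : f 0 = 0) {δ x : ℝ} (hδ : 0 < δ) (hδx : δ ≤ x) (hx : x ∈ S)
    (hfx : DifferentiableAt ℝ f x) : f δ / δ ≤ deriv f x := by
  have hδS : δ ∈ S := hf.1.ordConnected.out h0 hx ⟨hδ.le, hδx⟩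
  have hsecant := hf.secant_mono h0 hδS hx hδ.ne' (hδ.trans_le hδx).ne' hδx
  have hderiv := hf.slope_le_deriv h0 hx (hδ.trans_le hδx) hfx
  rw [slope_def_field] at hderiv
  simp only [hf0, sub_zero] at hsecant hderiv
  exact hsecant.trans hderiv

theorem ConvexOn.deriv_le_of_nonneg {S : Set ℝ} {f : ℝ → ℝ} (hf : ConvexOn ℝ S f)
    (hnn : ∀ y ∈ S, 0 ≤ f y) {y b : ℝ} (hy : y ∈ S) (hb : b ∈ S) (hyb : y + 1 ≤ b) :
    deriv f y ≤ f b := by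
  by_cases hfy : DifferentiableAt ℝ f y
  · have hslope := hf.deriv_le_slope hy hb (by linarith) hfy
    rw [slope_def_field] at hslope
    have hfb := hnn b hb
    calc deriv f y ≤ (f b - f y) / (b - y) := hslope
      _ ≤ f b / 1 := div_le_div₀ hfb (by linarith [hnn y hy]) one_pos (by linarith)
      _ = f b := div_one _
  · rw [deriv_zero_of_not_differentiableAt hfy]
    exact hnn b hb

theorem Real.sq_mul_le_of_le_sqrt_div {x A D : ℝ} (hx : 0 < x) (hD : 0 < D)
    (h : x ≤ √(A / D)) : x ^ 2 * D ≤ A :=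
  (le_div_iff₀ hD).1 ((Real.le_sqrt' hx).1 h)

theorem ConvexOn.sq_mul_mul_le_of_le_sqrt {S : Set ℝ} {f : ℝ → ℝ} (hf : ConvexOn ℝ S f)
    (h0 : 0 ∈ S) (hf0 : f 0 = 0) {δ x n A : ℝ} (hδ : 0 < δ) (hδx : δ ≤ x) (hx : x ∈ S)
    (hfδ : 0 < f δ) (hn : 0 < n) (h : x ≤ √(A / (n ^ 2 * deriv f x))) :
    n ^ 2 * δ * f δ ≤ A := by
  have hxpos : 0 < x := hδ.trans_le hδx
  by_cases hfx : DifferentiableAt ℝ f x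
  · have hslope := hf.div_le_deriv_of_map_zero h0 hf0 hδ hδx hx hfx
    have hderiv : 0 < deriv f x := (div_pos hfδ hδ).trans_le hslope
    have hsq := Real.sq_mul_le_of_le_sqrt_div hxpos (by positivity) h
    calc n ^ 2 * δ * f δ = n ^ 2 * δ ^ 2 * (f δ / δ) := by field_simp
      _ ≤ n ^ 2 * x ^ 2 * deriv f x := by gcongr
      _ = x ^ 2 * (n ^ 2 * deriv f x) := by ring
      _ ≤ A := hsq
  · rw [deriv_zero_of_not_differentiableAt hfx, mul_zero, div_zero, Real.sqrt_zero] at h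
    exact absurd h hxpos.not_ge

theorem equilibrium_precision_tendsto_zero_general
    (σ2 : ℝ) (c F : ℝ → ℝ)
    (hc_nonneg : ∀ x ∈ Icc 0 (1 / σ2), 0 ≤ c x)
    (hc_sconv : StrictConvexOn ℝ (Icc 0 (1 / σ2)) c)
    (hc0 : c 0 = 0)
    (hF_nonneg : ∀ x ∈ Ioi 0, 0 ≤ F x)
    (hF_sconv : StrictConvexOn ℝ (Ioi 0) F)
    (lamstar : ℕ → ℝ)
    (hfix : ∀ n : ℕ, 1 ≤ n → lamstar n ∈ Ioc 0 (1 / σ2) ∧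
      lamstar n = min (Real.sqrt (deriv F (1 / ((n : ℝ) * lamstar n))
        / ((n : ℝ) ^ 2 * deriv c (lamstar n)))) (1 / σ2)) :
    Tendsto lamstar atTop (nhds 0) := by
  refine tendsto_order.2 ⟨fun a ha => eventually_atTop.2 ⟨1, fun n hn => ha.trans (hfix n hn).1.1⟩,
    fun δ hδ => ?_⟩
  rcases lt_or_ge (1 / σ2) δ with hLδ | hδL
  · exact eventually_atTop.2 ⟨1, fun n hn => (hfix n hn).1.2.trans_lt hLδ⟩
  have h0 : (0 : ℝ) ∈ Icc 0 (1 / σ2) := ⟨le_rfl, hδ.le.trans hδL⟩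
  have hcδ : 0 < c δ :=
    hc_sconv.pos_of_nonneg_of_map_zero hc_nonneg h0 hc0 ⟨hδ.le, hδL⟩ hδ.ne'
  have hgrowth : Tendsto (fun n : ℕ => (n : ℝ) ^ 2 * δ * c δ) atTop atTop := by
    simpa only [mul_assoc, Function.comp_def] using ((tendsto_pow_atTop two_ne_zero).comp
      tendsto_natCast_atTop_atTop).atTop_mul_const (mul_pos hδ hcδ)
  filter_upwards [hgrowth.eventually_gt_atTop (F (1 / δ + 1)), eventually_ge_atTop 1]
    with n hnM hn
  obtain ⟨⟨hlam0, hlamL⟩, hlam⟩ := hfix n hn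
  by_contra! hδlam
  have hn' : (1 : ℝ) ≤ n := by exact_mod_cast hn
  have hy : 1 / ((n : ℝ) * lamstar n) ≤ 1 / δ :=
    one_div_le_one_div_of_le hδ (by nlinarith)
  have hF' : deriv F (1 / ((n : ℝ) * lamstar n)) ≤ F (1 / δ + 1) :=
    hF_sconv.convexOn.deriv_le_of_nonneg hF_nonneg (by simp only [mem_Ioi]; positivity)
      (by simp only [mem_Ioi]; positivity) (by linarith)
  have hbound := hc_sconv.convexOn.sq_mul_mul_le_of_le_sqrt h0 hc0 hδ hδlam ⟨hlam0.le, hlamL⟩ hcδ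
    (by positivity) (hlam.trans_le (min_le_left _ _))
  linarith

/-- the symmetric equilibrium precision `λ*(n)` of the homogeneous estimation
game with `n` agents (the unique fixed point of
`λ = min{√(F'(1/(nλ))/(n²c'(λ))), 1/σ²}`) tends to `0` as `n → ∞`. -/
theorem equilibrium_precision_tendsto_zero
    (σ2 : ℝ) (hσ2 : 0 < σ2) (c F : ℝ → ℝ)
    (hc_smooth : ContDiffOn ℝ 2 c (Icc 0 (1 / σ2)))
    (hc_nonneg : ∀ x ∈ Icc 0 (1 / σ2), 0 ≤ c x)
    (hc_mono : MonotoneOn c (Icc 0 (1 / σ2)))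
    (hc_sconv : StrictConvexOn ℝ (Icc 0 (1 / σ2)) c)
    (hc0 : c 0 = 0) (hc'0 : deriv c 0 = 0)
    (hF_smooth : ContDiffOn ℝ 2 F (Ioi 0))
    (hF_nonneg : ∀ x ∈ Ioi 0, 0 ≤ F x)
    (hF_mono : MonotoneOn F (Ioi 0))
    (hF_sconv : StrictConvexOn ℝ (Ioi 0) F)
    (lamstar : ℕ → ℝ)
    (hfix : ∀ n : ℕ, 1 ≤ n → lamstar n ∈ Ioc 0 (1 / σ2) ∧
      lamstar n = min (Real.sqrt (deriv F (1 / ((n : ℝ) * lamstar n))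
        / ((n : ℝ) ^ 2 * deriv c (lamstar n)))) (1 / σ2)) :
    Tendsto lamstar atTop (nhds 0) :=
  equilibrium_precision_tendsto_zero_general σ2 c F hc_nonneg hc_sconv hc0 hF_nonneg hF_sconv
    lamstar hfix
end

section
/- Let λ*(n) be the symmetric Nash equilibrium precision of the homogeneous estimation game with n agents, and assume λ*(n) < 1/σ² and λ*(n+1) < 1/σ², so that λ*(m) satisfies λ*(m) = √(F'(1/(m λ*(m)))/(m² c'(λ*(m)))). Then the equilibrium estimation variance is non-increasing: 1/((n+1)λ*(n+1)) ≤ 1/(n λ*(n)). -/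
/-!
With `x_m = m λ*(m)`, squaring the fixed-point equation gives `F'(1 / x_m) = x_m² c'(λ*(m))`
with `c'(λ*(m)) > 0`. If `x_{n+1} < x_n`, then `F'` and `c'` being non-decreasing (convexity),
together with `λ*(n+1) ≤ λ*(n)`, give `x_n² c'(λ*(n)) ≤ x_{n+1}² c'(λ*(n)) < x_n² c'(λ*(n))`.
-/

open Set

lemma MonotoneOn.deriv_nonneg_of_mem_interior {g : ℝ → ℝ} {s : Set ℝ} {x : ℝ}
    (hg : MonotoneOn g s) (hx : x ∈ interior s) : 0 ≤ deriv g x := by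
  rw [← derivWithin_of_mem_nhds (mem_interior_iff_mem_nhds.1 hx)]
  exact hg.derivWithin_nonneg

lemma ConvexOn.monotoneOn_deriv_interior_of_contDiffOn {f : ℝ → ℝ} {s : Set ℝ}
    {k : WithTop ℕ∞} (hk : k ≠ 0) (hf : ContDiffOn ℝ k f s) (hconv : ConvexOn ℝ s f) :
    MonotoneOn (deriv f) (interior s) :=
  (hconv.subset interior_subset hconv.1.interior).monotoneOn_deriv fun _ hx =>
    (hf.differentiableOn hk).differentiableAt (mem_interior_iff_mem_nhds.1 hx)

/-- `b = 0` is excluded because `a / 0 = 0` would force `l = 0`. -/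
lemma pos_and_eq_sq_mul_of_eq_sqrt_div {l a b k : ℝ} (hl : 0 < l) (hb : 0 ≤ b)
    (h : l = √(a / (k ^ 2 * b))) : 0 < b ∧ a = (k * l) ^ 2 * b := by
  have hpos : 0 < a / (k ^ 2 * b) := Real.sqrt_pos.1 (h ▸ hl)
  have hkb : k ^ 2 * b ≠ 0 := fun h0 => by simp [h0] at hpos
  have hsq : l ^ 2 = a / (k ^ 2 * b) := by rw [h, Real.sq_sqrt hpos.le]
  refine ⟨hb.lt_of_ne (right_ne_zero_of_mul hkb).symm, ?_⟩
  rw [eq_div_iff hkb] at hsq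
  linarith

lemma le_of_monotoneOn_one_div_eq_sq_mul {φ : ℝ → ℝ} (hφ : MonotoneOn φ (Ioi 0))
    {x y p q : ℝ} (hx : 0 < x) (hy : 0 < y) (hp : 0 < p) (hqp : q ≤ p)
    (hφx : φ (1 / x) = x ^ 2 * p) (hφy : φ (1 / y) = y ^ 2 * q) : x ≤ y := by
  by_contra! hyx
  have hφle : φ (1 / x) ≤ φ (1 / y) :=
    hφ (one_div_pos.2 hx) (one_div_pos.2 hy) (one_div_le_one_div_of_le hy hyx.le)
  have hsq : y ^ 2 < x ^ 2 := pow_lt_pow_left₀ hyx hy.le two_ne_zero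
  have : x ^ 2 * p < x ^ 2 * p :=
    calc x ^ 2 * p ≤ y ^ 2 * q := hφx ▸ hφy ▸ hφle
      _ ≤ y ^ 2 * p := by gcongr
      _ < x ^ 2 * p := by gcongr
  exact lt_irrefl _ this

theorem equilibrium_variance_nonincreasing_general
    (σ2 : ℝ) (c F : ℝ → ℝ)
    (hc_smooth : ContDiffOn ℝ 2 c (Icc 0 (1 / σ2)))
    (hc_mono : MonotoneOn c (Icc 0 (1 / σ2)))
    (hc_sconv : StrictConvexOn ℝ (Icc 0 (1 / σ2)) c)
    (hF_smooth : ContDiffOn ℝ 2 F (Ioi 0))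
    (hF_sconv : StrictConvexOn ℝ (Ioi 0) F)
    (n : ℕ) (hn : 1 ≤ n) (lamstar : ℕ → ℝ)
    -- interiority of the two equilibria
    (hpos : ∀ m : ℕ, m = n ∨ m = n + 1 → lamstar m ∈ Ioo 0 (1 / σ2))
    -- interior fixed-point characterization
    (hfix : ∀ m : ℕ, m = n ∨ m = n + 1 →
      lamstar m = Real.sqrt (deriv F (1 / ((m : ℝ) * lamstar m))
        / ((m : ℝ) ^ 2 * deriv c (lamstar m))))
    -- previously known: the equilibrium precision is non-increasing
    (hanti : lamstar (n + 1) ≤ lamstar n) :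
    1 / (((n : ℝ) + 1) * lamstar (n + 1)) ≤ 1 / ((n : ℝ) * lamstar n) := by
  have hc' := hc_sconv.convexOn.monotoneOn_deriv_interior_of_contDiffOn two_ne_zero hc_smooth
  have hF' := hF_sconv.convexOn.monotoneOn_deriv_interior_of_contDiffOn two_ne_zero hF_smooth
  rw [interior_Icc] at hc'
  rw [interior_Ioi] at hF'
  have hfixed : ∀ m : ℕ, m = n ∨ m = n + 1 → 0 < deriv c (lamstar m) ∧
      deriv F (1 / ((m : ℝ) * lamstar m)) = ((m : ℝ) * lamstar m) ^ 2 * deriv c (lamstar m) :=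
    fun m hm => pos_and_eq_sq_mul_of_eq_sqrt_div (hpos m hm).1
      (hc_mono.deriv_nonneg_of_mem_interior (by rw [interior_Icc]; exact hpos m hm)) (hfix m hm)
  obtain ⟨hc'n, hFn⟩ := hfixed n (.inl rfl)
  obtain ⟨-, hFn1⟩ := hfixed (n + 1) (.inr rfl)
  push_cast at hFn1
  have hlam := (hpos n (.inl rfl)).1
  have hlam_succ := (hpos (n + 1) (.inr rfl)).1
  have hnR : (0 : ℝ) < n := by exact_mod_cast hn
  exact one_div_le_one_div_of_le (by positivity) <|
    le_of_monotoneOn_one_div_eq_sq_mul hF' (by positivity) (by positivity) hc'n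
      (hc' (hpos _ (.inr rfl)) (hpos _ (.inl rfl)) hanti) hFn hFn1

/-- in the homogeneous estimation game, if the equilibrium precisions
`λ*(n)` and `λ*(n+1)` are interior (so they satisfy the fixed-point characterization
`λ*(m) = √(F'(1/(mλ*(m)))/(m²c'(λ*(m))))`), the equilibrium estimation variance is
non-increasing in the number of agents: `1/((n+1)λ*(n+1)) ≤ 1/(nλ*(n))`. -/
theorem equilibrium_variance_nonincreasing
    (σ2 : ℝ) (hσ2 : 0 < σ2) (c F : ℝ → ℝ)
    (hc_smooth : ContDiffOn ℝ 2 c (Icc 0 (1 / σ2)))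
    (hc_nonneg : ∀ x ∈ Icc 0 (1 / σ2), 0 ≤ c x)
    (hc_mono : MonotoneOn c (Icc 0 (1 / σ2)))
    (hc_sconv : StrictConvexOn ℝ (Icc 0 (1 / σ2)) c)
    (hc0 : c 0 = 0) (hc'0 : deriv c 0 = 0)
    (hF_smooth : ContDiffOn ℝ 2 F (Ioi 0))
    (hF_nonneg : ∀ x ∈ Ioi 0, 0 ≤ F x)
    (hF_mono : MonotoneOn F (Ioi 0))
    (hF_sconv : StrictConvexOn ℝ (Ioi 0) F)
    (n : ℕ) (hn : 1 ≤ n) (lamstar : ℕ → ℝ)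
    -- interiority of the two equilibria
    (hpos : ∀ m : ℕ, m = n ∨ m = n + 1 → lamstar m ∈ Ioo 0 (1 / σ2))
    -- interior fixed-point characterization
    (hfix : ∀ m : ℕ, m = n ∨ m = n + 1 →
      lamstar m = Real.sqrt (deriv F (1 / ((m : ℝ) * lamstar m))
        / ((m : ℝ) ^ 2 * deriv c (lamstar m))))
    -- previously known: the equilibrium precision is non-increasing
    (hanti : lamstar (n + 1) ≤ lamstar n) :
    1 / (((n : ℝ) + 1) * lamstar (n + 1)) ≤ 1 / ((n : ℝ) * lamstar n) :=
  equilibrium_variance_nonincreasing_general σ2 c F hc_smooth hc_mono hc_sconv hF_smooth hF_sconv n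
    hn lamstar hpos hfix hanti
end

section
/- Fix σ² > 0 and s > 1. The function h(s, η) = F(1/((s−1)η)) − F(1/(sη)) is strictly decreasing in s (for s > 1 real) for each fixed η ∈ (0, 1/σ²], where F: (0,∞) → ℝ is strictly convex and non-decreasing. -/
open Set

lemma aux_shift (F : ℝ → ℝ) (hF : StrictConvexOn ℝ (Ioi 0) F) {a b L : ℝ}
    (ha : 0 < a) (hab : a < b) (hL : 0 < L) :
    F (a + L) - F a < F (b + L) - F b := by
  have hb : 0 < b := ha.trans hab
  have haL : (0:ℝ) < a + L := by linarith
  have hbL : (0:ℝ) < b + L := by linarith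
  have h1 := hF.secant_strict_mono (a := a) (x := a + L) (y := b + L)
    (mem_Ioi.2 ha) (mem_Ioi.2 haL) (mem_Ioi.2 hbL)
    (by linarith) (by linarith) (by linarith)
  have h2 := hF.secant_strict_mono (a := b + L) (x := a) (y := b)
    (mem_Ioi.2 hbL) (mem_Ioi.2 ha) (mem_Ioi.2 hb)
    (by linarith) (by linarith) hab
  have e0 : a + L - a = L := by ring
  have e1 : (F a - F (b + L)) / (a - (b + L)) = (F (b + L) - F a) / (b + L - a) := by
    rw [← neg_div_neg_eq, neg_sub, neg_sub]
  have e2 : (F b - F (b + L)) / (b - (b + L)) = (F (b + L) - F b) / L := by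
    rw [← neg_div_neg_eq, neg_sub, neg_sub]
    congr 1; ring
  rw [e0] at h1
  rw [e1, e2] at h2
  have := h1.trans h2
  exact (div_lt_div_iff_of_pos_right hL).mp this

/-- for each fixed `η ∈ (0, 1/σ²]`, the function
`s ↦ F(1/((s−1)η)) − F(1/(sη))` is strictly decreasing in the real variable `s > 1`,
where `F : (0,∞) → ℝ` is strictly convex and non-decreasing. -/
theorem h_strictAnti_in_s
    (σ2 : ℝ) (hσ2 : 0 < σ2) (F : ℝ → ℝ)
    (hF_mono : MonotoneOn F (Ioi 0))
    (hF_sconv : StrictConvexOn ℝ (Ioi 0) F) :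
    ∀ η ∈ Ioc 0 (1 / σ2),
      StrictAntiOn (fun s : ℝ => F (1 / ((s - 1) * η)) - F (1 / (s * η))) (Ioi 1) := by
  rintro η ⟨hη0, -⟩ s1 hs1 s2 hs2 h12
  simp only [mem_Ioi] at hs1 hs2
  have hs1' : 0 < s1 - 1 := by linarith
  have hs2' : 0 < s2 - 1 := by linarith
  have hs1p : 0 < s1 := by linarith
  have hs2p : 0 < s2 := by linarith
  set a : ℝ := 1 / (s2 * η) with ha_def
  set a' : ℝ := 1 / ((s2 - 1) * η) with ha'_def
  set b : ℝ := 1 / (s1 * η) with hb_def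
  set b' : ℝ := 1 / ((s1 - 1) * η) with hb'_def
  have hap : 0 < a := by positivity
  have ha'p : 0 < a' := by positivity
  have hbp : 0 < b := by positivity
  have hb'p : 0 < b' := by positivity
  have hab : a < b := by
    apply one_div_lt_one_div_of_lt (by positivity)
    exact mul_lt_mul_of_pos_right h12 hη0
  have haa' : a < a' := by
    apply one_div_lt_one_div_of_lt (by positivity)
    exact mul_lt_mul_of_pos_right (by linarith) hη0
  set L : ℝ := a' - a with hL_def
  have hL : 0 < L := by simp [hL_def]; linarith
  have haL : a + L = a' := by ring
  have hLval : L = 1 / ((s2 - 1) * s2 * η) := by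
    rw [hL_def, ha'_def, ha_def]
    field_simp
    ring
  have hb'b : b' - b = 1 / ((s1 - 1) * s1 * η) := by
    rw [hb'_def, hb_def]
    field_simp
    ring
  have hbL : b + L ≤ b' := by
    have hle : 1 / ((s2 - 1) * s2 * η) ≤ 1 / ((s1 - 1) * s1 * η) := by
      apply one_div_le_one_div_of_le (by positivity)
      have : (s1 - 1) * s1 ≤ (s2 - 1) * s2 := by nlinarith
      exact mul_le_mul_of_nonneg_right this hη0.le
    linarith [hLval ▸ hle, hb'b]
  have key : F (a + L) - F a < F (b + L) - F b :=
    aux_shift F hF_sconv hap hab hL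
  have hmono : F (b + L) ≤ F b' :=
    hF_mono (mem_Ioi.2 (by linarith)) (mem_Ioi.2 hb'p) hbL
  rw [haL] at key
  show F b' - F b > F a' - F a
  linarith
end

section
/- In the modified homogeneous game Γ(S,η) with s > 1 agents and minimum precision η > η*(s) (where η*(s) solves F(1/((s−1)η)) − F(1/(sη)) = c(η)), the symmetric profile λᵢ = η for all i is not a Nash equilibrium: each agent strictly decreases her cost by deviating to precision 0, i.e., F(1/((s−1)η)) < F(1/(sη)) + c(η). -/
open Set

/-- in the modified homogeneous game with `s > 1` agents, if the minimum
precision level `η` exceeds `η*(s)` (the solution of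
`F(1/((s−1)η)) − F(1/(sη)) = c(η)`), then the symmetric profile `λᵢ = η` is not a Nash
equilibrium: each agent strictly decreases her cost by deviating to precision `0`, i.e.
`F(1/((s−1)η)) < F(1/(sη)) + c(η)`. -/
theorem above_etastar_deviation_to_zero_profitable
    (σ2 : ℝ) (hσ2 : 0 < σ2) (s : ℕ) (hs : 1 < s) (c F : ℝ → ℝ)
    (hc_smooth : ContDiffOn ℝ 2 c (Icc 0 (1 / σ2)))
    (hc_nonneg : ∀ x ∈ Icc 0 (1 / σ2), 0 ≤ c x)
    (hc_mono : MonotoneOn c (Icc 0 (1 / σ2)))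
    (hc_sconv : StrictConvexOn ℝ (Icc 0 (1 / σ2)) c)
    (hc0 : c 0 = 0) (hc'0 : deriv c 0 = 0)
    (hF_smooth : ContDiffOn ℝ 2 F (Ioi 0))
    (hF_nonneg : ∀ x ∈ Ioi 0, 0 ≤ F x)
    (hF_mono : MonotoneOn F (Ioi 0))
    (hF_sconv : StrictConvexOn ℝ (Ioi 0) F)
    (etastar : ℝ) (hetastar_mem : etastar ∈ Ioc 0 (1 / σ2))
    (hetastar : F (1 / (((s : ℝ) - 1) * etastar)) - F (1 / ((s : ℝ) * etastar)) = c etastar)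
    (η : ℝ) (hη : etastar < η) (hη' : η ≤ 1 / σ2) :
    F (1 / (((s : ℝ) - 1) * η)) < F (1 / ((s : ℝ) * η)) + c η := by
  obtain ⟨he0, he1⟩ := hetastar_mem
  have hn : (2 : ℝ) ≤ (s : ℝ) := by exact_mod_cast hs
  have hn1 : (0 : ℝ) < (s : ℝ) - 1 := by linarith
  have hn0 : (0 : ℝ) < (s : ℝ) := by linarith
  have hη0 : 0 < η := lt_trans he0 hη
  set x1 : ℝ := 1 / ((s : ℝ) * η) with hx1def
  set x2 : ℝ := 1 / (((s : ℝ) - 1) * η) with hx2def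
  set y1 : ℝ := 1 / ((s : ℝ) * etastar) with hy1def
  set y2 : ℝ := 1 / (((s : ℝ) - 1) * etastar) with hy2def
  have hx1pos : 0 < x1 := by positivity
  have hx2pos : 0 < x2 := by positivity
  have hy1pos : 0 < y1 := by positivity
  have hy2pos : 0 < y2 := by positivity
  have hx12 : x1 < x2 := by
    apply one_div_lt_one_div_of_lt
    · positivity
    · have : ((s : ℝ) - 1) * η < (s : ℝ) * η := by nlinarith
      linarith
  have hy12 : y1 < y2 := by
    apply one_div_lt_one_div_of_lt
    · positivity
    · nlinarith
  have hx2y2 : x2 < y2 := by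
    apply one_div_lt_one_div_of_lt
    · positivity
    · nlinarith
  have hx1y1 : x1 < y1 := by
    apply one_div_lt_one_div_of_lt
    · positivity
    · nlinarith
  -- widths
  have hw : x2 - x1 ≤ y2 - y1 := by
    have h1 : x2 - x1 = 1 / (((s : ℝ) - 1) * (s : ℝ)) * (1 / η) := by
      rw [hx1def, hx2def]; field_simp; ring
    have h2 : y2 - y1 = 1 / (((s : ℝ) - 1) * (s : ℝ)) * (1 / etastar) := by
      rw [hy1def, hy2def]; field_simp; ring
    rw [h1, h2]
    apply mul_le_mul_of_nonneg_left _ (by positivity)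
    exact le_of_lt (one_div_lt_one_div_of_lt he0 hη)
  have hm1 : x1 ∈ Ioi (0:ℝ) := hx1pos
  have hm2 : x2 ∈ Ioi (0:ℝ) := hx2pos
  have hm3 : y1 ∈ Ioi (0:ℝ) := hy1pos
  have hm4 : y2 ∈ Ioi (0:ℝ) := hy2pos
  -- slope comparison
  have hS : (F x2 - F x1) / (x2 - x1) < (F y2 - F y1) / (y2 - y1) := by
    calc (F x2 - F x1) / (x2 - x1) < (F y2 - F x1) / (y2 - x1) :=
          hF_sconv.secant_strict_mono_aux2 hm1 hm4 hx12 hx2y2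
      _ ≤ (F y2 - F y1) / (y2 - y1) :=
          hF_sconv.convexOn.secant_mono_aux3 hm1 hm4 hx1y1 hy12
  have hw1 : 0 < x2 - x1 := by linarith
  have hw2 : 0 < y2 - y1 := by linarith
  have hS2nn : 0 ≤ (F y2 - F y1) / (y2 - y1) :=
    div_nonneg (by linarith [hF_mono hm3 hm4 hy12.le]) hw2.le
  have key : F x2 - F x1 < F y2 - F y1 := by
    have h1 : F x2 - F x1 < (F y2 - F y1) / (y2 - y1) * (x2 - x1) :=
      (div_lt_iff₀ hw1).mp hS
    have h2 : (F y2 - F y1) / (y2 - y1) * (x2 - x1) ≤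
        (F y2 - F y1) / (y2 - y1) * (y2 - y1) :=
      mul_le_mul_of_nonneg_left hw hS2nn
    have h3 : (F y2 - F y1) / (y2 - y1) * (y2 - y1) = F y2 - F y1 :=
      div_mul_cancel₀ _ hw2.ne'
    linarith
  have hcmono : c etastar ≤ c η :=
    hc_mono ⟨he0.le, he1⟩ ⟨hη0.le, hη'⟩ hη.le
  have : F y2 - F y1 = c etastar := hetastar
  linarith
end

section
/- In the heterogeneous estimation game, let λ*(N) be the Nash equilibrium with agent set N = {1,...,n} and λ*(N ∪ {n+1}) the equilibrium when an additional agent n+1 joins. Then the estimation variance weakly improves: 1/Σ_{j∈N∪{n+1}} λⱼ*(N∪{n+1}) ≤ 1/Σ_{j∈N} λⱼ*(N). That is, at an interior equilibrium characterized by cᵢ'(λᵢ*)/F'(σ_M²(λ*)) = σ_M²(λ*) with σ_M²(λ) = 1/Σⱼλⱼ, adding an agent cannot increase the equilibrium variance, even though each incumbent's equilibrium precision weakly decreases (λᵢ*(N∪{n+1}) ≤ λᵢ*(N) for each i ∈ N). -/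
open Set

/-- in the heterogeneous estimation game, adding an `(n+1)`-th agent
weakly improves the estimation variance. Both equilibria are assumed interior, hence
characterized by the first-order conditions
`cᵢ'(λᵢ*) = F'(1/Σⱼλⱼ*)/(Σⱼλⱼ*)²`; moreover each incumbent's equilibrium precision
weakly decreases. Conclusion: `1/Σ_{j∈N∪{n+1}} λⱼ*(N∪{n+1}) ≤ 1/Σ_{j∈N} λⱼ*(N)`. -/
theorem adding_agent_weakly_improves_variance
    (n : ℕ) (hn : 1 ≤ n) (σ2 : ℝ) (hσ2 : 0 < σ2)
    (c : Fin (n + 1) → ℝ → ℝ) (F : ℝ → ℝ)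
    (hc_smooth : ∀ i, ContDiffOn ℝ 2 (c i) (Icc 0 (1 / σ2)))
    (hc_nonneg : ∀ i, ∀ x ∈ Icc 0 (1 / σ2), 0 ≤ c i x)
    (hc_mono : ∀ i, MonotoneOn (c i) (Icc 0 (1 / σ2)))
    (hc_sconv : ∀ i, StrictConvexOn ℝ (Icc 0 (1 / σ2)) (c i))
    (hc0 : ∀ i, c i 0 = 0) (hc'0 : ∀ i, deriv (c i) 0 = 0)
    (hF_smooth : ContDiffOn ℝ 2 F (Ioi 0))
    (hF_nonneg : ∀ x ∈ Ioi 0, 0 ≤ F x)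
    (hF_mono : MonotoneOn F (Ioi 0))
    (hF_sconv : StrictConvexOn ℝ (Ioi 0) F)
    -- interior equilibrium `λ*(N)` of the game with agents `{1,...,n}`
    (lamN : Fin n → ℝ) (hlamN_mem : ∀ i, lamN i ∈ Ioo 0 (1 / σ2))
    (hfocN : ∀ i : Fin n, deriv (c i.castSucc) (lamN i)
      = deriv F (1 / ∑ j, lamN j) / (∑ j, lamN j) ^ 2)
    -- interior equilibrium `λ*(N ∪ {n+1})` of the game with agents `{1,...,n+1}`
    (lamN1 : Fin (n + 1) → ℝ) (hlamN1_mem : ∀ i, lamN1 i ∈ Ioo 0 (1 / σ2))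
    (hfocN1 : ∀ i : Fin (n + 1), deriv (c i) (lamN1 i)
      = deriv F (1 / ∑ j, lamN1 j) / (∑ j, lamN1 j) ^ 2)
    -- each incumbent's equilibrium precision weakly decreases
    (hdec : ∀ i : Fin n, lamN1 i.castSucc ≤ lamN i) :
    1 / ∑ j, lamN1 j ≤ 1 / ∑ j, lamN j := by
  set S0 := ∑ j, lamN j with hS0
  set S1 := ∑ j, lamN1 j with hS1
  have hS0pos : 0 < S0 :=
    Finset.sum_pos (fun j _ => (hlamN_mem j).1) ⟨⟨0, hn⟩, Finset.mem_univ _⟩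
  have hS1pos : 0 < S1 :=
    Finset.sum_pos (fun j _ => (hlamN1_mem j).1) ⟨0, Finset.mem_univ _⟩
  by_contra hcon
  push_neg at hcon
  -- hcon : 1 / S0 < 1 / S1
  have hmemS0 : (1 / S0 : ℝ) ∈ Ioi (0:ℝ) := by rw [mem_Ioi]; positivity
  have hmemS1 : (1 / S1 : ℝ) ∈ Ioi (0:ℝ) := by rw [mem_Ioi]; positivity
  have hFdiff : ∀ x ∈ Ioi (0:ℝ), DifferentiableAt ℝ F x := fun x hx =>
    (hF_smooth.differentiableOn (by norm_num) x hx).differentiableAt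
      (isOpen_Ioi.mem_nhds hx)
  -- deriv F is strictly monotone on Ioi 0
  have hF' : StrictMonoOn (deriv F) (Ioi 0) := hF_sconv.strictMonoOn_deriv hFdiff
  have hF'lt : deriv F (1 / S0) < deriv F (1 / S1) := hF' hmemS0 hmemS1 hcon
  -- deriv F (1/S0) is nonnegative
  have hF'nonneg : 0 ≤ deriv F (1 / S0) := by
    have hhalf : (1 / S0 / 2 : ℝ) ∈ Ioi (0:ℝ) := by
      simp only [mem_Ioi] at hmemS0 ⊢; linarith
    have hlt : (1 / S0 / 2 : ℝ) < 1 / S0 := by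
      simp only [mem_Ioi] at hmemS0; linarith
    have hslope := hF_sconv.convexOn.slope_le_deriv hhalf hmemS0 hlt (hFdiff _ hmemS0)
    have hnum : 0 ≤ F (1 / S0) - F (1 / S0 / 2) := by
      have := hF_mono hhalf hmemS0 hlt.le
      linarith
    have hden : 0 < (1 / S0 - 1 / S0 / 2 : ℝ) := by linarith
    have : (0:ℝ) ≤ slope F (1 / S0 / 2) (1 / S0) := by
      rw [slope_def_field]
      exact div_nonneg hnum hden.le
    linarith
  -- the incumbent i = 0
  set i : Fin n := ⟨0, hn⟩ with hi
  have hmem1 : lamN1 i.castSucc ∈ Ioo 0 (1 / σ2) := hlamN1_mem _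
  have hmem0 : lamN i ∈ Ioo 0 (1 / σ2) := hlamN_mem i
  -- deriv (c i.castSucc) is monotone on Ioo 0 (1/σ2)
  have hcdiff : ∀ x ∈ Ioo (0:ℝ) (1 / σ2), DifferentiableAt ℝ (c i.castSucc) x := by
    intro x hx
    exact ((hc_smooth i.castSucc).differentiableOn (by norm_num) x
      (Ioo_subset_Icc_self hx)).differentiableAt
      (Icc_mem_nhds hx.1 hx.2)
  have hcmono : MonotoneOn (deriv (c i.castSucc)) (Ioo 0 (1 / σ2)) :=
    (((hc_sconv i.castSucc).subset Ioo_subset_Icc_self (convex_Ioo _ _)).strictMonoOn_deriv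
      hcdiff).monotoneOn
  have hle : deriv (c i.castSucc) (lamN1 i.castSucc) ≤ deriv (c i.castSucc) (lamN i) :=
    hcmono hmem1 hmem0 (hdec i)
  rw [hfocN1 i.castSucc, hfocN i] at hle
  -- but the FOC values satisfy the strict reverse inequality
  have hS1ltS0 : S1 < S0 := by
    by_contra hge
    push_neg at hge
    exact absurd hcon (not_lt.mpr (one_div_le_one_div_of_le hS0pos hge))
  have hsq : (0:ℝ) < S1 ^ 2 := by positivity
  have hsq0 : (0:ℝ) < S0 ^ 2 := by positivity
  have hsq' : S1 ^ 2 < S0 ^ 2 := by nlinarith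
  have hmul := (div_le_div_iff₀ hsq hsq0).mp hle
  nlinarith [hF'lt, hF'nonneg, hsq, hsq', hmul]
end
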